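/- Let N ≥ 1, K ≥ 2, and let (A_1, …, A_K) and (A'_1, …, A'_K) be ordered partitions of [0,N-1]. If A_i − A_j = A'_i − A'_j as multisets for all pairs i, j with 2 ≤ i, j ≤ K, then the two ordered partitions are homometric; in particular A_1 − A_k = A'_1 − A'_k for every k ∈ {1, …, K}. -/
import Mathlib


/-- The cyclic distance `d(i,j) = min(|i-j|, N-|i-j|)` on `ZMod N`. -/
def cdist {N : ℕ} (i j : ZMod N) : ℕ := min (i - j).val (j - i).val

/-- The cyclic difference multiset `A - B = {d(i,j) : i ∈ A, j ∈ B}`. -/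
def diffMS {N : ℕ} (A B : Finset (ZMod N)) : Multiset ℕ :=
  (A ×ˢ B).val.map fun p => cdist p.1 p.2

/-- The self difference multiset `A - A = {d(i,j) : i ≤ j ∈ A}`. -/
def selfDiffMS {N : ℕ} (A : Finset (ZMod N)) : Multiset ℕ :=
  ((A ×ˢ A).filter fun p => p.1.val ≤ p.2.val).val.map fun p => cdist p.1 p.2

/-- Two subsets are homometric if they have the same self difference multiset. -/
def Homometric {N : ℕ} (A B : Finset (ZMod N)) : Prop :=
  selfDiffMS A = selfDiffMS B

/-- `σ : ZMod N → ZMod N` is given by the action of an element of the dihedral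
group `D_{2N}`, generated by the rotation `i ↦ i + 1` and the reflection `i ↦ -i`. -/
def IsDihedral {N : ℕ} (σ : ZMod N → ZMod N) : Prop :=
  (∃ k : ZMod N, ∀ i, σ i = i + k) ∨ (∃ k : ZMod N, ∀ i, σ i = -i + k)

/-- Two subsets are equivalent if one is the image of the other under `D_{2N}`. -/
def EquivSets {N : ℕ} (A B : Finset (ZMod N)) : Prop :=
  ∃ σ : ZMod N → ZMod N, IsDihedral σ ∧ B = A.image σ

/-- An ordered partition of `[0, N-1]`: pairwise disjoint sets covering everything. -/
def IsPartitionOf {N K : ℕ} [NeZero N] (A : Fin K → Finset (ZMod N)) : Prop :=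
  (∀ i j, i ≠ j → Disjoint (A i) (A j)) ∧ Finset.univ.biUnion A = Finset.univ

/-- Two ordered partitions are homometric if `A i - A j = B i - B j` for all pairs. -/
def HomometricPart {N K : ℕ} (A B : Fin K → Finset (ZMod N)) : Prop :=
  ∀ i j, diffMS (A i) (A j) = diffMS (B i) (B j)

/-- Two ordered partitions are equivalent if a single dihedral element maps one to the other. -/
def EquivPart {N K : ℕ} (A B : Fin K → Finset (ZMod N)) : Prop :=
  ∃ σ : ZMod N → ZMod N, IsDihedral σ ∧ ∀ i, B i = (A i).image σ

/-- Two ordered partitions are pseudo-equivalent if each part is mapped by some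
(possibly different) dihedral element. -/
def PseudoEquivPart {N K : ℕ} (A B : Fin K → Finset (ZMod N)) : Prop :=
  ∀ i, ∃ σ : ZMod N → ZMod N, IsDihedral σ ∧ B i = (A i).image σ

/-- The periodic autocorrelation `a_x[ℓ] = ∑ x[n] x[n+ℓ]`. -/
noncomputable def autocorr {N : ℕ} [NeZero N] (x : ZMod N → ℝ) (ℓ : ZMod N) : ℝ :=
  ∑ n : ZMod N, x n * x (n + ℓ)

open Classical in
/-- The level set `{i : x[i] = a}` of a signal. -/
noncomputable def levelSet {N : ℕ} [NeZero N] (x : ZMod N → ℝ) (a : ℝ) : Finset (ZMod N) :=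
  Finset.univ.filter fun i => x i = a


lemma map_singleton_sum {α : Type*} (s : Multiset α) (f : α → ℕ) :
    (s.map fun x => ({f x} : Multiset ℕ)).sum = s.map f := by
  induction s using Multiset.induction with
  | empty => simp
  | cons a s ih => simp [ih]

lemma diffMS_eq_sum {N : ℕ} (A B : Finset (ZMod N)) :
    diffMS A B = ∑ a ∈ A, ∑ b ∈ B, ({cdist a b} : Multiset ℕ) := by
  rw [← Finset.sum_product', Finset.sum, map_singleton_sum, diffMS]

lemma card_diffMS {N : ℕ} (A B : Finset (ZMod N)) :
    Multiset.card (diffMS A B) = A.card * B.card := by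
  simp [diffMS]

lemma cdist_comm {N : ℕ} (a b : ZMod N) : cdist a b = cdist b a := by
  simp [cdist, min_comm]

lemma diffMS_comm {N : ℕ} (A B : Finset (ZMod N)) : diffMS A B = diffMS B A := by
  rw [diffMS_eq_sum, diffMS_eq_sum, Finset.sum_comm]
  simp [cdist_comm]

lemma diffMS_univ {N : ℕ} [NeZero N] (B : Finset (ZMod N)) :
    diffMS Finset.univ B = B.card • ∑ a : ZMod N, ({cdist a 0} : Multiset ℕ) := by
  rw [diffMS_eq_sum, Finset.sum_comm]
  have key : ∀ b : ZMod N, ∑ a : ZMod N, ({cdist a b} : Multiset ℕ)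
      = ∑ a : ZMod N, ({cdist a 0} : Multiset ℕ) := by
    intro b
    refine (Fintype.sum_equiv (Equiv.addRight b) _ _ fun a => ?_).symm
    show ({cdist a 0} : Multiset ℕ) = {cdist (a + b) b}
    simp only [cdist]
    ring_nf
  rw [Finset.sum_congr rfl fun b _ => key b, Finset.sum_const]

lemma sum_parts {N K : ℕ} [NeZero N] (A : Fin K → Finset (ZMod N))
    (hA : IsPartitionOf A) (g : ZMod N → Multiset ℕ) :
    ∑ a : ZMod N, g a = ∑ i : Fin K, ∑ a ∈ A i, g a := by
  rw [← hA.2, Finset.sum_biUnion]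
  exact fun i _ j _ hij => hA.1 i j hij

lemma split_left {N K : ℕ} [NeZero N] (A : Fin K → Finset (ZMod N))
    (hA : IsPartitionOf A) (B : Finset (ZMod N)) :
    diffMS Finset.univ B = ∑ i : Fin K, diffMS (A i) B := by
  rw [diffMS_eq_sum, sum_parts A hA]
  exact Finset.sum_congr rfl fun i _ => (diffMS_eq_sum _ _).symm

lemma split_right {N K : ℕ} [NeZero N] (A : Fin K → Finset (ZMod N))
    (hA : IsPartitionOf A) (C : Finset (ZMod N)) :
    diffMS C Finset.univ = ∑ j : Fin K, diffMS C (A j) := by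
  rw [diffMS_comm, split_left A hA]
  exact Finset.sum_congr rfl fun i _ => diffMS_comm _ _

/-- if all difference multisets away from the first part agree,
then the partitions are homometric; in particular the differences with the
first part agree. -/
theorem homometric_from_nonzero_parts (N K : ℕ) [NeZero N] [NeZero K] (hK : 2 ≤ K)
    (A A' : Fin K → Finset (ZMod N)) (hA : IsPartitionOf A) (hA' : IsPartitionOf A')
    (h : ∀ i j : Fin K, i ≠ 0 → j ≠ 0 → diffMS (A i) (A j) = diffMS (A' i) (A' j)) :
    HomometricPart A A' ∧ ∀ k : Fin K, diffMS (A 0) (A k) = diffMS (A' 0) (A' k) := by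
  have cardAj : ∀ j : Fin K, j ≠ 0 → (A j).card = (A' j).card := by
    intro j hj
    have hc := congrArg Multiset.card (h j j hj hj)
    rw [card_diffMS, card_diffMS] at hc
    exact Nat.mul_self_inj.mp hc
  have key1 : ∀ j : Fin K, j ≠ 0 → diffMS (A 0) (A j) = diffMS (A' 0) (A' j) := by
    intro j hj
    have e1 : ∑ i : Fin K, diffMS (A i) (A j) = ∑ i : Fin K, diffMS (A' i) (A' j) := by
      rw [← split_left A hA, ← split_left A' hA', diffMS_univ, diffMS_univ, cardAj j hj]
    rw [← Finset.add_sum_erase _ _ (Finset.mem_univ (0 : Fin K)),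
      ← Finset.add_sum_erase _ _ (Finset.mem_univ (0 : Fin K))] at e1
    have e2 : ∑ i ∈ Finset.univ.erase (0 : Fin K), diffMS (A i) (A j)
        = ∑ i ∈ Finset.univ.erase (0 : Fin K), diffMS (A' i) (A' j) :=
      Finset.sum_congr rfl fun i hi => h i j (Finset.ne_of_mem_erase hi) hj
    rw [e2] at e1
    exact add_right_cancel e1
  have hmost : ∀ i j : Fin K, ¬(i = 0 ∧ j = 0) →
      diffMS (A i) (A j) = diffMS (A' i) (A' j) := by
    intro i j hij
    by_cases hi : i = 0
    · subst hi
      exact key1 j fun hj => hij ⟨rfl, hj⟩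
    · by_cases hj : j = 0
      · subst hj
        rw [diffMS_comm, diffMS_comm (A' i)]
        exact key1 i hi
      · exact h i j hi hj
  have key00 : diffMS (A 0) (A 0) = diffMS (A' 0) (A' 0) := by
    have total : ∑ p : Fin K × Fin K, diffMS (A p.1) (A p.2)
        = ∑ p : Fin K × Fin K, diffMS (A' p.1) (A' p.2) := by
      have tA : ∀ (B : Fin K → Finset (ZMod N)), IsPartitionOf B →
          ∑ p : Fin K × Fin K, diffMS (B p.1) (B p.2)
            = diffMS (Finset.univ) (Finset.univ : Finset (ZMod N)) := by
        intro B hB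
        rw [Fintype.sum_prod_type, split_left B hB]
        exact Finset.sum_congr rfl fun i _ => (split_right B hB (B i)).symm
      rw [tA A hA, tA A' hA']
    rw [← Finset.add_sum_erase _ _ (Finset.mem_univ ((0 : Fin K), (0 : Fin K))),
      ← Finset.add_sum_erase _ _ (Finset.mem_univ ((0 : Fin K), (0 : Fin K)))] at total
    have e2 : ∑ p ∈ Finset.univ.erase ((0 : Fin K), (0 : Fin K)), diffMS (A p.1) (A p.2)
        = ∑ p ∈ Finset.univ.erase ((0 : Fin K), (0 : Fin K)), diffMS (A' p.1) (A' p.2) := by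
      refine Finset.sum_congr rfl fun p hp => hmost p.1 p.2 fun hc => ?_
      exact Finset.ne_of_mem_erase hp (Prod.ext hc.1 hc.2)
    rw [e2] at total
    exact add_right_cancel total
  have hall : ∀ i j : Fin K, diffMS (A i) (A j) = diffMS (A' i) (A' j) := by
    intro i j
    by_cases hc : i = 0 ∧ j = 0
    · rw [hc.1, hc.2]; exact key00
    · exact hmost i j hc
  exact ⟨hall, fun k => hall 0 k⟩
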